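/- Let X and Y be finite simple graphs. Then ϑ̄⁺(X * Y) ≤ ϑ̄⁺(X)·ϑ̄⁺(Y), where for a graph Z, ϑ̄⁺(Z) is the infimum of t ∈ ℝ such that there exists a doubly nonnegative matrix N indexed by V(Z) with N_{z,z} = t for all z, N_{z,z'} = 0 whenever z is adjacent to z' in Z, and N − J positive semidefinite (J the all-ones matrix). -/

import Mathlib

open Matrix

/-- A real matrix is completely positive if it equals `Pᵀ * P`
for some entrywise nonnegative real matrix `P`. -/
def IsCP {ι : Type*} (H : Matrix ι ι ℝ) : Prop :=
  ∃ (n : ℕ) (P : Matrix (Fin n) ι ℝ), (∀ i j, 0 ≤ P i j) ∧ H = Pᵀ * P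

/-- A real matrix indexed by `ι` is completely positive semidefinite if it is the Gram
matrix of real positive semidefinite `d × d` matrices for some `d ≥ 1`. -/
def IsCPSD {ι : Type*} (H : Matrix ι ι ℝ) : Prop :=
  ∃ d : ℕ, 0 < d ∧ ∃ ρ : ι → Matrix (Fin d) (Fin d) ℝ,
    (∀ i, (ρ i).PosSemidef) ∧ ∀ i j, H i j = (ρ i * ρ j).trace

/-- A real matrix is doubly nonnegative if it is positive semidefinite
and entrywise nonnegative. -/
def IsDNN {ι : Type*} [Fintype ι] (H : Matrix ι ι ℝ) : Prop :=
  H.PosSemidef ∧ ∀ i j, 0 ≤ H i j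

/-- Schrijver's theta `ϑ⁻(Z)`: optimize over doubly nonnegative matrices. -/
noncomputable def thetaMinus {γ : Type*} [Fintype γ] (Z : SimpleGraph γ) : ℝ :=
  sSup {r : ℝ | ∃ M : Matrix γ γ ℝ, IsDNN M ∧ M.trace = 1 ∧
    (∀ z z', Z.Adj z z' → M z z' = 0) ∧ r = ∑ z, ∑ z', M z z'}

/-- Szegedy's theta of the complement, `ϑ̄⁺(Z) = Θ^{DNN}(Z)`. -/
noncomputable def thetaBarPlus {γ : Type*} [Fintype γ] (Z : SimpleGraph γ) : ℝ :=
  sInf {t : ℝ | ∃ N : Matrix γ γ ℝ, IsDNN N ∧ (∀ z, N z z = t) ∧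
    (∀ z z', Z.Adj z z' → N z z' = 0) ∧
    (N - Matrix.of fun _ _ => (1 : ℝ)).PosSemidef}

/-- The lexicographic product `X[Y]`. -/
def lexProd {α β : Type*} (X : SimpleGraph α) (Y : SimpleGraph β) :
    SimpleGraph (α × β) where
  Adj p q := X.Adj p.1 q.1 ∨ (p.1 = q.1 ∧ Y.Adj p.2 q.2)
  symm := by
    constructor
    rintro ⟨x, y⟩ ⟨x', y'⟩ (h | ⟨h1, h2⟩)
    · exact Or.inl h.symm
    · exact Or.inr ⟨h1.symm, h2.symm⟩
  loopless := by
    constructor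
    rintro ⟨x, y⟩ (h | ⟨_, h⟩) <;> exact h.ne rfl

/-- The disjunctive product `X * Y`. -/
def disjProd {α β : Type*} (X : SimpleGraph α) (Y : SimpleGraph β) :
    SimpleGraph (α × β) where
  Adj p q := X.Adj p.1 q.1 ∨ Y.Adj p.2 q.2
  symm := by
    constructor
    rintro ⟨x, y⟩ ⟨x', y'⟩ (h | h)
    · exact Or.inl h.symm
    · exact Or.inr h.symm
  loopless := by
    constructor
    rintro ⟨x, y⟩ (h | h) <;> exact h.ne rfl

/-!
Feasible matrices multiply: if `N₁` is feasible for `X` with diagonal `a` and `N₂` for `Y` with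
diagonal `b`, then `N₁ ⊗ₖ N₂` is feasible for `X * Y` with diagonal `a * b`. It is doubly
nonnegative and vanishes on the edges of the disjunctive product, and since the all-ones matrix is
`J ⊗ₖ J`, the identity `N₁ ⊗ₖ N₂ - J ⊗ₖ J = (N₁ - J) ⊗ₖ N₂ + J ⊗ₖ (N₂ - J)` shows that
`N₁ ⊗ₖ N₂ - J` is positive semidefinite. Taking infima over the nonnegative feasible values gives
the inequality.
-/

open scoped Kronecker

theorem Real.sInf_le_sInf_mul_sInf {A B C : Set ℝ} (hA : A.Nonempty) (hB : B.Nonempty)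
    (hA₀ : ∀ a ∈ A, 0 ≤ a) (hB₀ : ∀ b ∈ B, 0 ≤ b) (hC : BddBelow C)
    (hAB : ∀ a ∈ A, ∀ b ∈ B, a * b ∈ C) : sInf C ≤ sInf A * sInf B := by
  have h : ∀ a ∈ A, sInf C ≤ sInf B * a := fun a ha => by
    rw [mul_comm, ← smul_eq_mul, ← Real.sInf_smul_of_nonneg (hA₀ a ha)]
    exact csInf_le_csInf hC hB.smul_set (Set.smul_set_subset_iff.2 fun b hb => hAB a ha b hb)
  rw [mul_comm, ← smul_eq_mul, ← Real.sInf_smul_of_nonneg (Real.sInf_nonneg hB₀)]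
  exact le_csInf hA.smul_set (Set.forall_mem_image.2 h)

namespace Matrix

variable {ι : Type*} [Fintype ι]

theorem posSemidef_const_one : (of fun _ _ => (1 : ℝ) : Matrix ι ι ℝ).PosSemidef := by
  simpa [vecMulVec] using posSemidef_vecMulVec_self_star (fun _ : ι => (1 : ℝ))

theorem card_smul_one_sub_const_one_eq_lapMatrix_top [DecidableEq ι] :
    (Fintype.card ι : ℝ) • (1 : Matrix ι ι ℝ) - of (fun _ _ => (1 : ℝ)) =
      (⊤ : SimpleGraph ι).lapMatrix ℝ := by
  ext i j
  have : Nonempty ι := ⟨i⟩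
  by_cases h : i = j
  · subst h
    simp [SimpleGraph.lapMatrix, SimpleGraph.degMatrix, Nat.cast_sub Fintype.card_pos]
  · simp [SimpleGraph.lapMatrix, SimpleGraph.degMatrix, h]

end Matrix

section ThetaBarPlus

variable {γ : Type*} [Fintype γ]

def thetaBarPlusFeasible (Z : SimpleGraph γ) : Set ℝ :=
  {t : ℝ | ∃ N : Matrix γ γ ℝ, IsDNN N ∧ (∀ z, N z z = t) ∧
    (∀ z z', Z.Adj z z' → N z z' = 0) ∧
    (N - Matrix.of fun _ _ => (1 : ℝ)).PosSemidef}

theorem thetaBarPlus_eq_sInf (Z : SimpleGraph γ) :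
    thetaBarPlus Z = sInf (thetaBarPlusFeasible Z) := rfl

theorem card_mem_thetaBarPlusFeasible (Z : SimpleGraph γ) :
    (Fintype.card γ : ℝ) ∈ thetaBarPlusFeasible Z := by
  classical
  refine ⟨(Fintype.card γ : ℝ) • 1, ⟨PosSemidef.one.smul (by positivity), fun i j => ?_⟩,
    fun z => by simp, fun z z' h => by simp [one_apply, h.ne], ?_⟩
  · by_cases h : i = j <;> simp [one_apply, h]
  · rw [card_smul_one_sub_const_one_eq_lapMatrix_top]
    exact SimpleGraph.posSemidef_lapMatrix ℝ ⊤

theorem nonneg_of_mem_thetaBarPlusFeasible [Nonempty γ] {Z : SimpleGraph γ} {t : ℝ}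
    (ht : t ∈ thetaBarPlusFeasible Z) : 0 ≤ t := by
  obtain ⟨N, hN, hdiag, -, -⟩ := ht
  obtain ⟨z⟩ := ‹Nonempty γ›
  exact hdiag z ▸ hN.2 z z

-- Every `t` is feasible on an empty vertex type, and `sInf Set.univ = 0` in `ℝ`.
theorem thetaBarPlus_of_isEmpty [IsEmpty γ] (Z : SimpleGraph γ) : thetaBarPlus Z = 0 := by
  have hpsd (M : Matrix γ γ ℝ) : M.PosSemidef := Subsingleton.elim 0 M ▸ PosSemidef.zero
  have : thetaBarPlusFeasible Z = Set.univ := Set.eq_univ_of_forall fun _ =>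
    ⟨0, ⟨hpsd 0, isEmptyElim⟩, isEmptyElim, isEmptyElim, hpsd _⟩
  rw [thetaBarPlus_eq_sInf, this, Real.sInf_univ]

end ThetaBarPlus

theorem mul_mem_thetaBarPlusFeasible_disjProd {α β : Type*} [Fintype α] [Fintype β]
    {X : SimpleGraph α} {Y : SimpleGraph β} {a b : ℝ} (ha : a ∈ thetaBarPlusFeasible X)
    (hb : b ∈ thetaBarPlusFeasible Y) : a * b ∈ thetaBarPlusFeasible (disjProd X Y) := by
  obtain ⟨N₁, hN₁, hdiag₁, hadj₁, hJ₁⟩ := ha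
  obtain ⟨N₂, hN₂, hdiag₂, hadj₂, hJ₂⟩ := hb
  have hsplit : N₁ ⊗ₖ N₂ - of (fun _ _ => 1) = (N₁ - of fun _ _ => 1) ⊗ₖ N₂ +
      (of fun _ _ => (1 : ℝ) : Matrix α α ℝ) ⊗ₖ (N₂ - of fun _ _ => 1) := by
    ext ⟨x, y⟩ ⟨x', y'⟩
    simp only [Matrix.sub_apply, Matrix.add_apply, kroneckerMap_apply, of_apply]
    ring
  refine ⟨N₁ ⊗ₖ N₂, ⟨hN₁.1.kronecker hN₂.1, fun _ _ => mul_nonneg (hN₁.2 _ _) (hN₂.2 _ _)⟩,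
    fun _ => by simp [hdiag₁, hdiag₂], ?_, ?_⟩
  · rintro ⟨x, y⟩ ⟨x', y'⟩ (h | h)
    · simp [hadj₁ x x' h]
    · simp [hadj₂ y y' h]
  · rw [hsplit]
    exact (hJ₁.kronecker hN₂.1).add (posSemidef_const_one.kronecker hJ₂)

theorem stmt_15 {α β : Type*} [Fintype α] [Fintype β]
    (X : SimpleGraph α) (Y : SimpleGraph β) :
    thetaBarPlus (disjProd X Y) ≤ thetaBarPlus X * thetaBarPlus Y := by
  rcases isEmpty_or_nonempty α with _ | _
  · simp [thetaBarPlus_of_isEmpty]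
  rcases isEmpty_or_nonempty β with _ | _
  · simp [thetaBarPlus_of_isEmpty]
  exact Real.sInf_le_sInf_mul_sInf ⟨_, card_mem_thetaBarPlusFeasible X⟩
    ⟨_, card_mem_thetaBarPlusFeasible Y⟩ (fun _ => nonneg_of_mem_thetaBarPlusFeasible)
    (fun _ => nonneg_of_mem_thetaBarPlusFeasible)
    ⟨0, fun _ => nonneg_of_mem_thetaBarPlusFeasible⟩
    fun _ ha _ hb => mul_mem_thetaBarPlusFeasible_disjProd ha hb
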